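/- Suppose n ≥ 2 and {1,…,n} is the disjoint union of two nonempty subsets S_1 and S_2 such that the sequential weak values are weakly independent over this splitting, i.e. w(T_1 ∪ T_2) = w(T_1)·w(T_2) for every nonempty T_1 ⊆ S_1 and every nonempty T_2 ⊆ S_2. Then the cumulant of the sequential weak values of the full set vanishes: Σ over all set partitions {B_1,…,B_k} of {1,…,n} of (k−1)!·(−1)^{k−1}·∏_{j=1}^k w(B_j) = 0. -/

import Mathlib

/-!
For a weight `f` on finsets with `f ∅ = 1`, let `Z_f(x) = ∑_P (x)_{|P|} ∏_{B ∈ P} f B`, with falling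
factorials `(x)_k`. Since `(x)_k' (0) = (-1)^{k-1} (k-1)!`, the cumulant of `f` is `Z_f'(0)`. At
`x = N` the polynomial counts colourings, `Z_f(N) = ∑_{g : α → Fin N} ∏_j f (g⁻¹ j)`, by grouping
colourings according to the partition into their nonempty fibres. If `f` factors along a
splitting `α = S ⊔ Sᶜ`, a colouring of `α` is a pair of colourings of `S` and `Sᶜ`, so
`Z_f = Z_{f|S} Z_{f|Sᶜ}`. Both factors vanish at `0` when `S` and `Sᶜ` are nonempty, and hence
so does `Z_f'(0)`.
-/

/-- The operator `M(S) = U_{n+1} B_n U_n ⋯ B_1 U_1` of a sequential weak measurement,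
where `B_k = A_k` if `k ∈ S` and `B_k = 1` otherwise (here indices are `0`-based:
`A : Fin n` are the observables and `U : Fin (n+1)` the evolutions, `U k` being the
evolution applied just before the observable `A k`). -/
noncomputable def seqOp {H : Type*} [AddCommGroup H] [Module ℂ H] (n : ℕ)
    (A : Fin n → Module.End ℂ H) (U : Fin (n + 1) → Module.End ℂ H)
    (S : Finset (Fin n)) : Module.End ℂ H :=
  U (Fin.last n) *
    ((List.ofFn fun k : Fin n => (if k ∈ S then A k else 1) * U k.castSucc).reverse).prod

/-- The sequential weak value `w(S) = ⟨ψ_f, M(S) ψ_i⟩ / ⟨ψ_f, M(∅) ψ_i⟩` of the subset `S`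
of observables. -/
noncomputable def weakValue {H : Type*} [NormedAddCommGroup H] [InnerProductSpace ℂ H]
    (n : ℕ) (A : Fin n → Module.End ℂ H) (U : Fin (n + 1) → Module.End ℂ H)
    (ψi ψf : H) (S : Finset (Fin n)) : ℂ :=
  (inner ℂ ψf (seqOp n A U S ψi) : ℂ) / (inner ℂ ψf (seqOp n A U ∅ ψi) : ℂ)

open Finset Polynomial

lemma Finpartition.image_part_eq_parts {α : Type*} [DecidableEq α] {s : Finset α}
    (P : Finpartition s) : s.image P.part = P.parts := by
  ext B
  refine ⟨fun hB => ?_, fun hB => ?_⟩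
  · obtain ⟨a, ha, rfl⟩ := mem_image.1 hB
    exact P.part_mem.2 ha
  · obtain ⟨a, ha⟩ := P.nonempty_of_mem_parts hB
    exact mem_image.2 ⟨a, P.le hB ha, P.part_eq_of_mem hB ha⟩

section Kernel

variable {α β : Type*} [Fintype α] [DecidableEq α] [DecidableEq β]

def kerPartition (g : α → β) : Finpartition (univ : Finset α) :=
  @Finpartition.ofSetoid α _ _ (Setoid.ker g) fun a b => decEq (g a) (g b)

lemma kerPartition_parts (g : α → β) :
    (kerPartition g).parts = univ.image fun a => ({b | g b = g a} : Finset α) := by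
  simp only [kerPartition, Finpartition.ofSetoid, Finpartition.ofSetSetoid]
  congr 1
  ext a b
  simp [eq_comm]

lemma prod_fiber_eq_prod_kerPartition [Fintype β] {R : Type*} [CommMonoid R]
    (f : Finset α → R) (hf : f ∅ = 1) (g : α → β) :
    ∏ j, f {a | g a = j} = ∏ B ∈ (kerPartition g).parts, f B := by
  have fiber_injOn : Set.InjOn (fun j => ({a | g a = j} : Finset α)) (univ.image g) := by
    rintro _ hj j' - hjj'
    obtain ⟨a, -, rfl⟩ := mem_image.1 hj
    simpa using (Finset.ext_iff.1 hjj' a)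
  calc ∏ j, f {a | g a = j}
      = ∏ j ∈ univ.image g, f {a | g a = j} := by
        refine (prod_subset (subset_univ _) fun j _ hj => ?_).symm
        rw [filter_false_of_mem fun a _ ha => hj (mem_image.2 ⟨a, mem_univ a, ha⟩), hf]
    _ = ∏ B ∈ (kerPartition g).parts, f B := by
        rw [kerPartition_parts, ← prod_image fiber_injOn, image_image]
        rfl

lemma part_kerPartition (g : α → β) (a : α) :
    (kerPartition g).part a = ({b | g b = g a} : Finset α) := by
  ext b
  rw [kerPartition, Finpartition.mem_part_ofSetoid_iff_rel]
  simp [eq_comm]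

lemma kerPartition_eq_iff (g : α → β) (P : Finpartition (univ : Finset α)) :
    kerPartition g = P ↔ ∀ a, P.part a = ({b | g b = g a} : Finset α) := by
  simp_rw [← part_kerPartition g]
  refine ⟨fun h a => h ▸ rfl, fun h => Finpartition.ext ?_⟩
  rw [← (kerPartition g).image_part_eq_parts, ← P.image_part_eq_parts]
  exact image_congr fun a _ => (h a).symm

lemma card_kerPartition_eq (P : Finpartition (univ : Finset α)) (N : ℕ) :
    #{g : α → Fin N | kerPartition g = P} = N.descFactorial #P.parts := by
  -- the colourings with kernel `P` are the injective labellings of its parts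
  let label (e : P.parts ↪ Fin N) (a : α) : Fin N := e ⟨P.part a, P.part_mem.2 (mem_univ a)⟩
  have label_injective : Function.Injective label := by
    intro e e' h
    refine Function.Embedding.ext fun ⟨B, hB⟩ => ?_
    obtain ⟨a, ha⟩ := P.nonempty_of_mem_parts hB
    simpa [label, P.part_eq_of_mem hB ha] using congrFun h a
  have filter_eq_image :
      ({g | kerPartition g = P} : Finset (α → Fin N)) = univ.image label := by
    ext g
    simp only [mem_filter, mem_univ, true_and, mem_image, kerPartition_eq_iff]
    constructor
    · intro hg
      let rep (B : P.parts) : α := (P.nonempty_of_mem_parts B.2).choose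
      have rep_mem (B : P.parts) : rep B ∈ B.1 := (P.nonempty_of_mem_parts B.2).choose_spec
      have eq_fiber_rep (B : P.parts) : B.1 = ({b | g b = g (rep B)} : Finset α) := by
        rw [← hg, P.part_eq_of_mem B.2 (rep_mem B)]
      refine ⟨⟨g ∘ rep, fun B B' h => Subtype.ext ?_⟩, funext fun a => ?_⟩
      · rw [eq_fiber_rep B, eq_fiber_rep B']
        simp only [Function.comp_apply] at h
        rw [h]
      · exact (mem_filter.1 ((hg a).subset (rep_mem _))).2
    · rintro ⟨e, rfl⟩ a
      ext b
      simp [label, P.mem_part_iff_part_eq_part, e.injective.eq_iff, Subtype.ext_iff]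
  rw [filter_eq_image, card_image_of_injective _ label_injective, card_univ, Fintype.card_embedding_eq,
    Fintype.card_fin, Fintype.card_coe]

end Kernel

section Pochhammer

variable {R : Type*} [CommRing R]

lemma descPochhammer_eval_neg_one (k : ℕ) :
    (descPochhammer R k).eval (-1) = (-1) ^ k * k.factorial := by
  induction k with
  | zero => simp
  | succ k ih =>
    rw [descPochhammer_succ_eval, ih, Nat.factorial_succ]
    push_cast
    ring

lemma derivative_descPochhammer_eval_zero (k : ℕ) :
    (derivative (descPochhammer R (k + 1))).eval 0 = (-1) ^ k * k.factorial := by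
  simp [descPochhammer_succ_left, derivative_mul, descPochhammer_eval_neg_one]

end Pochhammer

section PartitionPoly

variable {α R : Type*} [Fintype α] [DecidableEq α] [CommRing R]

def cumulant (f : Finset α → R) : R :=
  ∑ P : Finpartition (univ : Finset α),
    ((#P.parts - 1).factorial : R) * (-1) ^ (#P.parts - 1) * ∏ B ∈ P.parts, f B

noncomputable def partitionPoly (f : Finset α → R) : R[X] :=
  ∑ P : Finpartition (univ : Finset α), C (∏ B ∈ P.parts, f B) * descPochhammer R #P.parts

lemma card_parts_ne_zero [Nonempty α] (P : Finpartition (univ : Finset α)) : #P.parts ≠ 0 :=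
  (P.parts_nonempty univ_nonempty.ne_empty).card_pos.ne'

lemma partitionPoly_eval_zero [Nonempty α] (f : Finset α → R) : (partitionPoly f).eval 0 = 0 := by
  rw [partitionPoly, eval_finsetSum]
  exact sum_eq_zero fun P _ => by
    rw [eval_mul, descPochhammer_ne_zero_eval_zero _ (card_parts_ne_zero P), mul_zero]

lemma cumulant_eq_derivative_partitionPoly_eval_zero [Nonempty α] (f : Finset α → R) :
    cumulant f = (derivative (partitionPoly f)).eval 0 := by
  rw [cumulant, partitionPoly, derivative_sum, eval_finsetSum]
  refine sum_congr rfl fun P _ => ?_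
  obtain ⟨k, hk⟩ := Nat.exists_eq_succ_of_ne_zero (card_parts_ne_zero P)
  rw [derivative_C_mul, eval_mul, eval_C, hk, derivative_descPochhammer_eval_zero]
  simp only [Nat.succ_sub_one]
  ring

lemma partitionPoly_eval_natCast (f : Finset α → R) (hf : f ∅ = 1) (N : ℕ) :
    (partitionPoly f).eval (N : R) = ∑ g : α → Fin N, ∏ j, f {a | g a = j} := by
  simp_rw [prod_fiber_eq_prod_kerPartition f hf, partitionPoly, eval_finsetSum]
  rw [← sum_fiberwise univ kerPartition]
  refine sum_congr rfl fun P _ => ?_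
  rw [sum_congr rfl fun g hg => by rw [(mem_filter.1 hg).2], sum_const, card_kerPartition_eq,
    eval_mul, eval_C, descPochhammer_eval_eq_descFactorial, nsmul_eq_mul, mul_comm]

variable (p : α → Prop) [DecidablePred p]

lemma sum_prod_fiber_eq_mul (f : Finset α → R)
    (hf : ∀ B, f B = f (B.filter p) * f (B.filter (¬ p ·)))
    (β : Type*) [Fintype β] [DecidableEq β] :
    ∑ g : α → β, ∏ j, f {a | g a = j} =
      (∑ g : {a // p a} → β, ∏ j, f (({a | g a = j} : Finset _).map (.subtype _))) *
      (∑ g : {a // ¬ p a} → β, ∏ j, f (({a | g a = j} : Finset _).map (.subtype _))) := by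
  rw [sum_mul_sum, ← Fintype.sum_prod_type']
  refine Fintype.sum_equiv (Equiv.piEquivPiSubtypeProd p fun _ => β) _ _ fun g => ?_
  rw [← prod_mul_distrib]
  refine prod_congr rfl fun j _ => ?_
  rw [hf]
  congr 2 <;> ext a <;> simp

lemma partitionPoly_eq_mul [IsDomain R] [CharZero R] (f : Finset α → R) (hf0 : f ∅ = 1)
    (hf : ∀ B, f B = f (B.filter p) * f (B.filter (¬ p ·))) :
    partitionPoly f =
      partitionPoly (fun B : Finset {a // p a} => f (B.map (.subtype _))) *
      partitionPoly (fun B : Finset {a // ¬ p a} => f (B.map (.subtype _))) := by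
  refine eq_of_infinite_eval_eq _ _ ((Set.infinite_range_of_injective Nat.cast_injective).mono ?_)
  rintro _ ⟨N, rfl⟩
  simp only [Set.mem_ofPred_eq, eval_mul]
  rw [partitionPoly_eval_natCast _ hf0, partitionPoly_eval_natCast _ (by simpa using hf0),
    partitionPoly_eval_natCast _ (by simpa using hf0)]
  exact sum_prod_fiber_eq_mul p f hf _

theorem cumulant_eq_zero_of_split [IsDomain R] [CharZero R] (f : Finset α → R)
    (h₁ : ∃ a, p a) (h₂ : ∃ a, ¬ p a) (hf0 : f ∅ = 1)
    (hf : ∀ B, f B = f (B.filter p) * f (B.filter (¬ p ·))) : cumulant f = 0 := by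
  obtain ⟨a₁, ha₁⟩ := h₁
  obtain ⟨a₂, ha₂⟩ := h₂
  have : Nonempty α := ⟨a₁⟩
  have : Nonempty {a // p a} := ⟨⟨a₁, ha₁⟩⟩
  have : Nonempty {a // ¬ p a} := ⟨⟨a₂, ha₂⟩⟩
  rw [cumulant_eq_derivative_partitionPoly_eval_zero, partitionPoly_eq_mul p f hf0 hf,
    derivative_mul, eval_add, eval_mul, eval_mul, partitionPoly_eval_zero, partitionPoly_eval_zero,
    mul_zero, zero_mul, add_zero]

end PartitionPoly

theorem cumulant_weakValue_eq_zero_of_weaklyIndependent_general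
    {H : Type*} [NormedAddCommGroup H] [InnerProductSpace ℂ H]
    {n : ℕ} (ψi ψf : H)
    (A : Fin n → Module.End ℂ H) (U : Fin (n + 1) → Module.End ℂ H)
    (hD : (inner ℂ ψf (seqOp n A U ∅ ψi) : ℂ) ≠ 0)
    (S₁ S₂ : Finset (Fin n)) (h₁ : S₁.Nonempty) (h₂ : S₂.Nonempty)
    (hdisj : Disjoint S₁ S₂) (hunion : S₁ ∪ S₂ = Finset.univ)
    (hwi : ∀ T₁ ⊆ S₁, ∀ T₂ ⊆ S₂, T₁.Nonempty → T₂.Nonempty →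
      weakValue n A U ψi ψf (T₁ ∪ T₂) =
        weakValue n A U ψi ψf T₁ * weakValue n A U ψi ψf T₂) :
    ∑ P : Finpartition (Finset.univ : Finset (Fin n)),
      (Nat.factorial (P.parts.card - 1) : ℂ) * (-1) ^ (P.parts.card - 1) *
        ∏ B ∈ P.parts, weakValue n A U ψi ψf B = 0 := by
  set w := weakValue n A U ψi ψf
  have hw0 : w ∅ = 1 := div_self hD
  have hw_mul : ∀ T₁ ⊆ S₁, ∀ T₂ ⊆ S₂, w (T₁ ∪ T₂) = w T₁ * w T₂ := by
    intro T₁ hT₁ T₂ hT₂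
    rcases T₁.eq_empty_or_nonempty with rfl | hne₁
    · rw [empty_union, hw0, one_mul]
    rcases T₂.eq_empty_or_nonempty with rfl | hne₂
    · rw [union_empty, hw0, mul_one]
    exact hwi T₁ hT₁ T₂ hT₂ hne₁ hne₂
  have not_mem_iff (a : Fin n) : a ∉ S₁ ↔ a ∈ S₂ :=
    ⟨fun h => (mem_union.1 (hunion ▸ mem_univ a)).resolve_left h, fun h => disjoint_right.1 hdisj h⟩
  obtain ⟨a₁, ha₁⟩ := h₁
  obtain ⟨a₂, ha₂⟩ := h₂
  refine cumulant_eq_zero_of_split (· ∈ S₁) w ⟨a₁, ha₁⟩ ⟨a₂, (not_mem_iff a₂).2 ha₂⟩ hw0 fun B => ?_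
  have hB₂ : B.filter (· ∉ S₁) = B ∩ S₂ := by
    ext a
    simp [not_mem_iff]
  rw [filter_mem_eq_inter, hB₂, ← hw_mul _ inter_subset_right _ inter_subset_right,
    ← inter_union_distrib_left, hunion, inter_univ]

/-- Suppose `n ≥ 2` and `{1,…,n}` is the disjoint union of two nonempty
subsets `S₁`, `S₂` such that the sequential weak values are weakly independent over this
splitting.  Then the cumulant of the sequential weak values of the full set vanishes. -/
theorem cumulant_weakValue_eq_zero_of_weaklyIndependent
    {H : Type*} [NormedAddCommGroup H] [InnerProductSpace ℂ H] [FiniteDimensional ℂ H]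
    {n : ℕ} (hn : 2 ≤ n) (ψi ψf : H)
    (A : Fin n → Module.End ℂ H) (U : Fin (n + 1) → Module.End ℂ H)
    (hD : (inner ℂ ψf (seqOp n A U ∅ ψi) : ℂ) ≠ 0)
    (S₁ S₂ : Finset (Fin n)) (h₁ : S₁.Nonempty) (h₂ : S₂.Nonempty)
    (hdisj : Disjoint S₁ S₂) (hunion : S₁ ∪ S₂ = Finset.univ)
    (hwi : ∀ T₁ ⊆ S₁, ∀ T₂ ⊆ S₂, T₁.Nonempty → T₂.Nonempty →
      weakValue n A U ψi ψf (T₁ ∪ T₂) =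
        weakValue n A U ψi ψf T₁ * weakValue n A U ψi ψf T₂) :
    ∑ P : Finpartition (Finset.univ : Finset (Fin n)),
      (Nat.factorial (P.parts.card - 1) : ℂ) * (-1) ^ (P.parts.card - 1) *
        ∏ B ∈ P.parts, weakValue n A U ψi ψf B = 0 :=
  cumulant_weakValue_eq_zero_of_weaklyIndependent_general ψi ψf A U hD S₁ S₂ h₁ h₂ hdisj hunion hwi
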